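/- Let c > 0, h > 0, and let μ : ℝ → ℝ satisfy μ(x) − μ(x') ≤ −c(x − x') whenever x ≥ x'. For x, x' ∈ ℝ with x − x' ∈ 2hℤ, define the one-step expected distance change D(x,x') := (|x−x'+2h| − |x−x'|)·(μ(x) − μ(x)∧μ(x'))/(2h) + (|x−x'−2h| − |x−x'|)·(μ(x') − μ(x)∧μ(x'))/(2h). Then D(x,x') = sgn(x−x')·(μ(x) − μ(x')) ≤ −c|x−x'| (interpreting sgn appropriately when x = x'). -/

import Mathlib

/-!
Away from the diagonal the grid condition gives `|x - x'| ≥ 2|h|`, so each jump of `±2h` changes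
the distance by exactly `±2h · sgn(x - x')`. The minimum then cancels from the drift, leaving
`sgn(x - x') (μ x - μ x')`, and the one-sided Lipschitz condition bounds this by `-c |x - x'|`.
-/

theorem abs_add_sub_abs_eq_sign_mul {a b : ℝ} (hb : |b| ≤ |a|) :
    |a + b| - |a| = Real.sign a * b := by
  rcases lt_trichotomy a 0 with ha | rfl | ha
  · rw [abs_of_neg ha] at hb ⊢
    rw [abs_of_nonpos (by linarith [le_abs_self b]), Real.sign_of_neg ha]
    ring
  · simp_all
  · rw [abs_of_pos ha] at hb ⊢
    rw [abs_of_nonneg (by linarith [neg_abs_le b]), Real.sign_of_pos ha]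
    ring

theorem abs_two_mul_le_abs_of_eq_mul_intCast {d h : ℝ} {k : ℤ} (hk : d = 2 * h * k)
    (hd : d ≠ 0) : |2 * h| ≤ |d| := by
  have hk0 : k ≠ 0 := by rintro rfl; simp_all
  have hk1 : (1 : ℝ) ≤ |(k : ℝ)| := by exact_mod_cast Int.one_le_abs hk0
  rw [hk, abs_mul (2 * h)]
  exact le_mul_of_one_le_right (abs_nonneg _) hk1

theorem abs_jump_drift_eq_sign_mul {d h : ℝ} (hh : h ≠ 0) (hd : |2 * h| ≤ |d|) (p q : ℝ) :
    (|d + 2 * h| - |d|) * (p / (2 * h)) + (|d - 2 * h| - |d|) * (q / (2 * h))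
      = Real.sign d * (p - q) := by
  rw [sub_eq_add_neg d, abs_add_sub_abs_eq_sign_mul hd,
    abs_add_sub_abs_eq_sign_mul (by rwa [abs_neg])]
  field_simp
  ring

theorem sign_sub_mul_sub_le_neg_mul_abs {c : ℝ} {μ : ℝ → ℝ}
    (hμ : ∀ x x' : ℝ, x' ≤ x → μ x - μ x' ≤ -c * (x - x')) (x x' : ℝ) :
    Real.sign (x - x') * (μ x - μ x') ≤ -c * |x - x'| := by
  rcases lt_trichotomy x x' with hlt | rfl | hgt
  · rw [Real.sign_of_neg (sub_neg.2 hlt), abs_of_neg (sub_neg.2 hlt)]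
    linarith [hμ x' x hlt.le]
  · simp
  · rw [Real.sign_of_pos (sub_pos.2 hgt), abs_of_pos (sub_pos.2 hgt)]
    linarith [hμ x x' hgt.le]

theorem stmt_10_general (c h : ℝ) (μ : ℝ → ℝ)
    (hμ : ∀ x x' : ℝ, x' ≤ x → μ x - μ x' ≤ -c * (x - x'))
    (x x' : ℝ) (hgrid : ∃ k : ℤ, x - x' = 2 * h * k) :
    (|x - x' + 2 * h| - |x - x'|) * ((μ x - min (μ x) (μ x')) / (2 * h)) +
      (|x - x' - 2 * h| - |x - x'|) * ((μ x' - min (μ x) (μ x')) / (2 * h))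
      = Real.sign (x - x') * (μ x - μ x') ∧
    (|x - x' + 2 * h| - |x - x'|) * ((μ x - min (μ x) (μ x')) / (2 * h)) +
      (|x - x' - 2 * h| - |x - x'|) * ((μ x' - min (μ x) (μ x')) / (2 * h))
      ≤ -c * |x - x'| := by
  obtain ⟨k, hk⟩ := hgrid
  have hdrift : (|x - x' + 2 * h| - |x - x'|) * ((μ x - min (μ x) (μ x')) / (2 * h)) +
      (|x - x' - 2 * h| - |x - x'|) * ((μ x' - min (μ x) (μ x')) / (2 * h))
      = Real.sign (x - x') * (μ x - μ x') := by
    rcases eq_or_ne (x - x') 0 with hd | hd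
    · rw [sub_eq_zero.1 hd]
      simp
    · have hh : h ≠ 0 := by rintro rfl; simp_all
      rw [abs_jump_drift_eq_sign_mul hh (abs_two_mul_le_abs_of_eq_mul_intCast hk hd),
        sub_sub_sub_cancel_right]
  exact ⟨hdrift, hdrift ▸ sign_sub_mul_sub_le_neg_mul_abs hμ x x'⟩

/-- Coupling contraction for the finite-difference Markov chain (step 2.a.(i) of
the proof of Proposition 4.2): if `μ(x) - μ(x') ≤ -c(x - x')` whenever `x ≥ x'`,
then for grid points with `x - x' ∈ 2hℤ`, the one-step expected distance change
`D(x,x')` equals `sgn(x-x')(μ(x) - μ(x'))` and is at most `-c|x - x'|`. -/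
theorem stmt_10 (c h : ℝ) (hc : 0 < c) (hh : 0 < h) (μ : ℝ → ℝ)
    (hμ : ∀ x x' : ℝ, x' ≤ x → μ x - μ x' ≤ -c * (x - x'))
    (x x' : ℝ) (hgrid : ∃ k : ℤ, x - x' = 2 * h * k) :
    (|x - x' + 2 * h| - |x - x'|) * ((μ x - min (μ x) (μ x')) / (2 * h)) +
      (|x - x' - 2 * h| - |x - x'|) * ((μ x' - min (μ x) (μ x')) / (2 * h))
      = Real.sign (x - x') * (μ x - μ x') ∧
    (|x - x' + 2 * h| - |x - x'|) * ((μ x - min (μ x) (μ x')) / (2 * h)) +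
      (|x - x' - 2 * h| - |x - x'|) * ((μ x' - min (μ x) (μ x')) / (2 * h))
      ≤ -c * |x - x'| :=
  stmt_10_general c h μ hμ x x' hgrid
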